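/- Let R ∈ ℝ^{r×r} be a rotation matrix (RᵀR = I and det(R) = 1), let λ ∈ [0,1], and set M(λ) = (1−λ)I + λR. Suppose Q ∈ ℝ^{r×r} satisfies QᵀQ = I, det(Q) > 0, and ‖Q − M(λ)‖_F ≤ ‖P − M(λ)‖_F for every P ∈ ℝ^{r×r} with PᵀP = I and det(P) > 0 (i.e., Q minimizes the distance to M(λ) over the special orthogonal group). Then ‖Q − I‖_F ≤ 2λ‖R − I‖_F. -/
import Mathlib


open scoped BigOperators
open Matrix

/-- Frobenius norm of a real matrix. -/
noncomputable def frob {m n : Type*} [Fintype m] [Fintype n] (M : Matrix m n ℝ) : ℝ :=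
  Real.sqrt (∑ i, ∑ j, (M i j) ^ 2)

section aux
attribute [local instance] Matrix.frobeniusSeminormedAddCommGroup Matrix.frobeniusNormedSpace

lemma frob_eq_norm {m n : Type*} [Fintype m] [Fintype n] (M : Matrix m n ℝ) :
    frob M = ‖M‖ := by
  rw [frob, Matrix.frobenius_norm_def, Real.sqrt_eq_rpow]
  congr 1
  refine Finset.sum_congr rfl fun i _ => Finset.sum_congr rfl fun j _ => ?_
  rw [Real.norm_eq_abs, Real.rpow_two, sq_abs]

lemma frob_triangle {m n : Type*} [Fintype m] [Fintype n] (A B : Matrix m n ℝ) :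
    frob (A + B) ≤ frob A + frob B := by
  simp only [frob_eq_norm]; exact norm_add_le A B

lemma frob_smul {m n : Type*} [Fintype m] [Fintype n] (c : ℝ) (A : Matrix m n ℝ) :
    frob (c • A) = |c| * frob A := by
  simp only [frob_eq_norm]
  rw [norm_smul, Real.norm_eq_abs]

end aux

/-- Soft rotation shrinkage: if `Q` is a special-orthogonal projection of
the interpolant `M(λ) = (1−λ)I + λR` of a rotation `R`, then `‖Q − I‖_F ≤ 2λ‖R − I‖_F`. -/
theorem soft_rotation_shrinkage (r : ℕ)
    (R : Matrix (Fin r) (Fin r) ℝ) (hR : Rᵀ * R = 1) (hdetR : R.det = 1)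
    (lam : ℝ) (hlam0 : 0 ≤ lam) (hlam1 : lam ≤ 1)
    (Q : Matrix (Fin r) (Fin r) ℝ) (hQ : Qᵀ * Q = 1) (hdetQ : 0 < Q.det)
    (hmin : ∀ P : Matrix (Fin r) (Fin r) ℝ, Pᵀ * P = 1 → 0 < P.det →
      frob (Q - ((1 - lam) • (1 : Matrix (Fin r) (Fin r) ℝ) + lam • R))
        ≤ frob (P - ((1 - lam) • (1 : Matrix (Fin r) (Fin r) ℝ) + lam • R))) :
    frob (Q - 1) ≤ 2 * lam * frob (R - 1) := by
  set M : Matrix (Fin r) (Fin r) ℝ := (1 - lam) • (1 : Matrix (Fin r) (Fin r) ℝ) + lam • R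
    with hM
  have h1 : frob (Q - 1) ≤ frob (Q - M) + frob (M - 1) := by
    have := frob_triangle (Q - M) (M - 1)
    simpa using this
  have hMI : M - 1 = lam • (R - 1) := by
    rw [hM]; module
  have hIM : (1 : Matrix (Fin r) (Fin r) ℝ) - M = lam • (1 - R) := by
    rw [hM]; module
  have h2 : frob (M - 1) = lam * frob (R - 1) := by
    rw [hMI, frob_smul, abs_of_nonneg hlam0]
  have h3 : frob (Q - M) ≤ lam * frob (R - 1) := by
    have := hmin 1 (by simp) (by simp)
    rw [show (1 : Matrix (Fin r) (Fin r) ℝ) - M = lam • (1 - R) from hIM] at this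
    rw [frob_smul, abs_of_nonneg hlam0] at this
    have hneg : frob ((1 : Matrix (Fin r) (Fin r) ℝ) - R) = frob (R - 1) := by
      have : (1 : Matrix (Fin r) (Fin r) ℝ) - R = (-1 : ℝ) • (R - 1) := by module
      rw [this, frob_smul]; norm_num
    rwa [hneg] at this
  linarith
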